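/- arXiv:0812.2043 — 4 statements merged into one kernel-verified Lean document; each statement's English description precedes it below -/
import Mathlib

section
/- Let A be an F_p-algebra and a ∈ W(A) a Witt vector. For every d ≥ 1, (V(a))^d = F^{d-1}(V^d(a^d)). -/
/-!
Since `V (x * F y) = V x * y` and `F (V x) = p x`, induction on `d` gives
`(V a)^d = p^(d-1) V(a^d)`; and `F^(d-1) V^(d-1)` is multiplication by `p^(d-1)`,
so the right-hand side is `p^(d-1) V(a^d)` as well.
-/

open WittVector

namespace WittVector

variable {p : ℕ} [Fact p.Prime] {R : Type*} [CommRing R]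

theorem verschiebung_mul_natCast (x : WittVector p R) (n : ℕ) :
    verschiebung (x * (n : WittVector p R)) = verschiebung x * n := by
  simpa only [map_natCast] using verschiebung_mul_frobenius x (n : WittVector p R)

theorem verschiebung_pow_succ (a : WittVector p R) (n : ℕ) :
    verschiebung a ^ (n + 1) = verschiebung (a ^ (n + 1)) * (p : WittVector p R) ^ n := by
  induction n with
  | zero => simp
  | succ n ih =>
    rw [pow_succ, ih, mul_right_comm, ← verschiebung_mul_frobenius, frobenius_verschiebung,
      ← mul_assoc, ← pow_succ, verschiebung_mul_natCast, mul_assoc, ← pow_succ']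

theorem iterate_frobenius_iterate_verschiebung (x : WittVector p R) (n : ℕ) :
    (⇑(frobenius (p := p) (R := R)))^[n] ((⇑verschiebung)^[n] x) =
      x * (p : WittVector p R) ^ n := by
  induction n generalizing x with
  | zero => simp
  | succ n ih =>
    rw [Function.iterate_succ_apply', Function.iterate_succ_apply, ih, map_mul,
      frobenius_verschiebung, map_pow, map_natCast, mul_assoc, ← pow_succ']

end WittVector

theorem stmt3_general (p : ℕ) [Fact p.Prime] (A : Type*) [CommRing A]
    (a : WittVector p A) (d : ℕ) :
    (verschiebung a) ^ d =
      (⇑(frobenius (p := p) (R := A)))^[d - 1] ((⇑verschiebung)^[d] (a ^ d)) := by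
  cases d with
  | zero => simp
  | succ n =>
    rw [verschiebung_pow_succ, Nat.add_sub_cancel, Function.iterate_succ_apply,
      iterate_frobenius_iterate_verschiebung]

/-- For an `𝔽_p`-algebra `A`, `a ∈ W(A)` and `d ≥ 1`, `(V(a))^d = F^{d-1}(V^d(a^d))`. -/
theorem stmt3 (p : ℕ) [Fact p.Prime] (A : Type*) [CommRing A] [Algebra (ZMod p) A]
    (a : WittVector p A) (d : ℕ) (hd : 1 ≤ d) :
    (verschiebung a) ^ d =
      (⇑(frobenius (p := p) (R := A)))^[d - 1] ((⇑verschiebung)^[d] (a ^ d)) :=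
  stmt3_general p A a d
end

section
/- Let k be a perfect field of characteristic p, A a k-algebra, and Δ ∈ W(k)[X_1,...,X_n] a homogeneous polynomial (form) of degree d ≥ 1. Then for any a_1,...,a_n ∈ W(A), Δ(V(a_1),...,V(a_n)) = F^{d-1}(V^d((FΔ)(a_1,...,a_n))), where FΔ is obtained from Δ by applying the Frobenius of W(k) to its coefficients. -/
/-!
Since `F ∘ V = p`, the projection formula `V x * y = V (x * F y)` gives
`V x * V y = p * V (x * y)`, so a monomial of degree `d ≥ 1` in `V a₁, …, V aₙ` equals
`p ^ (d - 1) * V` of the same monomial in the `aᵢ`, and a scalar `c` moves inside `V` as `F c`.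
Summing over the monomials of the form `Δ` gives `p ^ (d - 1) * V ((FΔ)(a))`, which is
`F^[d-1] (V^[d] ((FΔ)(a)))` because `F` fixes `p`.
-/

open WittVector

namespace WittVector

variable {p : ℕ} [Fact p.Prime] {R : Type*} [CommRing R]

theorem verschiebung_mul_verschiebung (x y : WittVector p R) :
    verschiebung x * verschiebung y = p * verschiebung (x * y) := by
  rw [← verschiebung_mul_frobenius x (verschiebung y), frobenius_verschiebung, ← mul_assoc,
    mul_comm _ (p : WittVector p R), ← nsmul_eq_mul, map_nsmul, nsmul_eq_mul]

theorem multiset_prod_map_verschiebung {s : Multiset (WittVector p R)} (hs : s ≠ 0) :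
    (s.map verschiebung).prod =
      (p : WittVector p R) ^ (Multiset.card s - 1) * verschiebung s.prod := by
  induction s using Multiset.induction with
  | empty => exact absurd rfl hs
  | cons x s ih =>
    rcases eq_or_ne s 0 with rfl | hs'
    · simp
    obtain ⟨m, hm⟩ := Nat.exists_eq_add_of_lt (Multiset.card_pos.2 hs')
    rw [Multiset.map_cons, Multiset.prod_cons, ih hs', Multiset.prod_cons, Multiset.card_cons,
      mul_left_comm, verschiebung_mul_verschiebung, hm]
    simp only [zero_add, add_tsub_cancel_right]
    ring

theorem iterate_frobenius_iterate_verschiebung_succ (d : ℕ) (x : WittVector p R) :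
    frobenius^[d] (verschiebung^[d + 1] x) = (p : WittVector p R) ^ d * verschiebung x := by
  induction d with
  | zero => simp
  | succ d ih =>
    rw [Function.iterate_succ_apply' verschiebung, Function.iterate_succ_apply,
      frobenius_verschiebung, iterate_map_mul, ih,
      Function.iterate_fixed (map_natCast frobenius p) d, pow_succ]
    ring

theorem prod_verschiebung_pow {σ : Type*} (a : σ → WittVector p R) {e : σ →₀ ℕ}
    (he : e ≠ 0) :
    ∏ i ∈ e.support, verschiebung (a i) ^ e i =
      (p : WittVector p R) ^ (e.degree - 1) * verschiebung (∏ i ∈ e.support, a i ^ e i) := by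
  have prod_toMultiset_map (g : σ → WittVector p R) :
      (e.toMultiset.map g).prod = ∏ i ∈ e.support, g i ^ e i := by
    rw [Finsupp.toMultiset_map, Finsupp.prod_toMultiset,
      Finsupp.prod_mapDomain_index (fun _ => pow_zero _) (fun _ _ _ => pow_add _ _ _)]
    rfl
  have hne : e.toMultiset.map a ≠ 0 := by
    classical
    rw [Ne, Multiset.map_eq_zero]
    contrapose! he
    rw [← Finsupp.toMultiset_toFinsupp e, he, Multiset.toFinsupp_zero]
  calc ∏ i ∈ e.support, verschiebung (a i) ^ e i
      = ((e.toMultiset.map a).map verschiebung).prod := by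
        rw [Multiset.map_map]; exact (prod_toMultiset_map _).symm
    _ = (p : WittVector p R) ^ (Multiset.card (e.toMultiset.map a) - 1) *
          verschiebung (e.toMultiset.map a).prod := multiset_prod_map_verschiebung hne
    _ = _ := by rw [prod_toMultiset_map, Multiset.card_map, Finsupp.card_toMultiset]; rfl

theorem eval₂_verschiebung_of_isHomogeneous {S σ : Type*} [CommSemiring S]
    (φ : S →+* WittVector p R) (a : σ → WittVector p R) {d : ℕ} {Δ : MvPolynomial σ S}
    (hΔ : Δ.IsHomogeneous (d + 1)) :
    MvPolynomial.eval₂ φ (fun i => verschiebung (a i)) Δ =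
      (p : WittVector p R) ^ d * verschiebung (MvPolynomial.eval₂ (frobenius.comp φ) a Δ) := by
  rw [MvPolynomial.eval₂_eq, MvPolynomial.eval₂_eq, map_sum, Finset.mul_sum]
  refine Finset.sum_congr rfl fun e he => ?_
  have hdeg : e.degree = d + 1 := by
    rw [Finsupp.degree_eq_weight_one]
    exact hΔ (MvPolynomial.mem_support_iff.mp he)
  have he0 : e ≠ 0 := by
    rintro rfl
    simp at hdeg
  rw [prod_verschiebung_pow a he0, hdeg, Nat.add_sub_cancel, RingHom.comp_apply,
    mul_comm (frobenius _), verschiebung_mul_frobenius]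
  ring

theorem frobenius_comp_map {S : Type*} [CommRing S] (g : R →+* S) :
    frobenius.comp (map g) = (map g).comp (frobenius (p := p)) := by
  ext x m
  simp only [RingHom.comp_apply, map_coeff, coeff_frobenius, MvPolynomial.map_aeval]
  apply MvPolynomial.eval₂Hom_congr (RingHom.ext_int _ _) _ rfl
  ext1 i
  simp [map_coeff]

end WittVector

theorem stmt4_general (p : ℕ) [Fact p.Prime] (k : Type*) [Field k] [CharP k p]
    (A : Type*) [CommRing A] [Algebra k A] (n d : ℕ) (hd : 1 ≤ d)
    (Δ : MvPolynomial (Fin n) (WittVector p k)) (hΔ : Δ.IsHomogeneous d)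
    (a : Fin n → WittVector p A) :
    MvPolynomial.eval₂ (WittVector.map (algebraMap k A)) (fun i => verschiebung (a i)) Δ =
      (⇑(frobenius (p := p) (R := A)))^[d - 1]
        ((⇑verschiebung)^[d]
          (MvPolynomial.eval₂ (WittVector.map (algebraMap k A)) a
            (MvPolynomial.map (WittVector.frobenius (p := p) (R := k)) Δ))) := by
  obtain ⟨d', rfl⟩ := Nat.exists_eq_add_of_le' hd
  rw [MvPolynomial.eval₂_map, ← frobenius_comp_map, Nat.add_sub_cancel,
    iterate_frobenius_iterate_verschiebung_succ, eval₂_verschiebung_of_isHomogeneous _ _ hΔ]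

/-- Let `k` be a perfect field of characteristic `p`, `A` a `k`-algebra, and
`Δ ∈ W(k)[X_1,…,X_n]` a form of degree `d ≥ 1`.  Then for all `a_1,…,a_n ∈ W(A)`,
`Δ(V a_1, …, V a_n) = F^{d-1}(V^d((FΔ)(a_1,…,a_n)))`, where `FΔ` is obtained by
applying the Frobenius of `W(k)` to the coefficients of `Δ`, and `Δ` is evaluated
in `W(A)` via the ring map `W(k) → W(A)` induced by `k → A`. -/
theorem stmt4 (p : ℕ) [Fact p.Prime] (k : Type*) [Field k] [CharP k p] [PerfectRing k p]
    (A : Type*) [CommRing A] [Algebra k A] (n d : ℕ) (hd : 1 ≤ d)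
    (Δ : MvPolynomial (Fin n) (WittVector p k)) (hΔ : Δ.IsHomogeneous d)
    (a : Fin n → WittVector p A) :
    MvPolynomial.eval₂ (WittVector.map (algebraMap k A)) (fun i => verschiebung (a i)) Δ =
      (⇑(frobenius (p := p) (R := A)))^[d - 1]
        ((⇑verschiebung)^[d]
          (MvPolynomial.eval₂ (WittVector.map (algebraMap k A)) a
            (MvPolynomial.map (WittVector.frobenius (p := p) (R := k)) Δ))) :=
  stmt4_general p k A n d hd Δ hΔ a
end

section
/- Let p = 2 and A an F_2-algebra. If x, y ∈ W(A) have equal 0-th coordinates x_0 = y_0, then x − y = V(x̃ − ỹ), where x̃ = (x_1, x_2, ...) is the shift of x and similarly for ỹ. -/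
open WittVector

namespace WittVector

variable {p : ℕ} [Fact p.Prime] {R : Type*} [CommRing R]

/- The Teichmüller lift of `x₀` and `V(x₁, x₂, …)` have disjoint supports, so their sum is
computed coordinatewise. -/
theorem teichmuller_add_verschiebung_tail (x : WittVector p R) :
    teichmuller p (x.coeff 0) + verschiebung (mk p fun n => x.coeff (n + 1)) = x := by
  have disjoint : ∀ n, (teichmuller p (x.coeff 0)).coeff n = 0 ∨
      (verschiebung (mk p fun n => x.coeff (n + 1))).coeff n = 0
    | 0 => Or.inr (verschiebung_coeff_zero _)
    | n + 1 => Or.inl (teichmuller_coeff_pos p _ (n + 1) n.succ_pos)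
  ext n
  rw [coeff_add_of_disjoint n _ _ disjoint]
  cases n with
  | zero => simp only [teichmuller_coeff_zero, verschiebung_coeff_zero, add_zero]
  | succ n =>
    simp only [teichmuller_coeff_pos p _ (n + 1) n.succ_pos, verschiebung_coeff_succ, coeff_mk,
      zero_add]

theorem sub_eq_verschiebung_sub_tail_of_coeff_zero_eq {x y : WittVector p R}
    (h : x.coeff 0 = y.coeff 0) :
    x - y = verschiebung
      (mk p (fun n => x.coeff (n + 1)) - mk p (fun n => y.coeff (n + 1))) := by
  conv_lhs => rw [← teichmuller_add_verschiebung_tail x, ← teichmuller_add_verschiebung_tail y]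
  rw [h, map_sub]
  abel

end WittVector

theorem stmt8_general (A : Type*) [CommRing A]
    (x y : WittVector 2 A) (h : x.coeff 0 = y.coeff 0) :
    x - y =
      verschiebung
        (WittVector.mk 2 (fun n => x.coeff (n + 1)) -
          WittVector.mk 2 (fun n => y.coeff (n + 1))) :=
  sub_eq_verschiebung_sub_tail_of_coeff_zero_eq h

/-- Let `A` be an `𝔽_2`-algebra.  If `x, y ∈ W(A)` (2-typical Witt vectors) have
equal 0-th coordinates, then `x - y = V(x̃ - ỹ)`, where `x̃ = (x₁, x₂, …)` is the
shift of `x = (x₀, x₁, …)`. -/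
theorem stmt8 (A : Type*) [CommRing A] [Algebra (ZMod 2) A]
    (x y : WittVector 2 A) (h : x.coeff 0 = y.coeff 0) :
    x - y =
      verschiebung
        (WittVector.mk 2 (fun n => x.coeff (n + 1)) -
          WittVector.mk 2 (fun n => y.coeff (n + 1))) :=
  stmt8_general A x y h
end

section
/- Let p be a prime and f ∈ Z_p[X] a polynomial whose reduction f̄ ∈ F_p[X] is separable and non-constant. Then ∫_{Z_p} |f(x)|_p dx = 1 − m/(p+1), where m is the number of roots of f̄ in F_p and dx is the Haar probability measure on Z_p. -/
/-!
Reduction mod `p` cuts `ℤ_p` into `p` residue discs, each of measure `1/p`. On a disc over a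
non-root of `f̄` we have `|f| ≡ 1`. Over a root `a`, which is simple since `f̄` is separable,
Hensel's lemma gives a root `α` of `f` in the disc with `f'(α)` a unit; then `f = (X - α) g`
with `g` a unit on the whole disc, so `|f(x)| = |x - α|` there, and after translating by `α`
the disc contributes `∫_{pℤ_p} |x| dx`. Summing `|x|` over the spheres `|x| = p⁻ᵏ` gives
`∫_{ℤ_p} |x| dx = p/(p+1)`, whence `∫_{pℤ_p} |x| dx = p/(p+1) - (p-1)/p = 1/(p(p+1))`, and
the total is `m/(p(p+1)) + (p-m)/p = 1 - m/(p+1)`.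
-/

open MeasureTheory Metric Polynomial Set PadicInt

section FiniteQuotient

variable {G R F : Type*} [AddGroup G] [AddGroup R] [FunLike F G R] [AddMonoidHomClass F G R]

theorem AddMonoidHomClass.preimage_singleton_eq_preimage_ker (φ : F) {e : G} :
    φ ⁻¹' {φ e} = (-e + ·) ⁻¹' (φ ⁻¹' {0}) := by
  ext x
  simp only [mem_preimage, mem_singleton_iff, map_add, map_neg, neg_add_eq_zero]
  exact eq_comm

variable [MeasurableSpace G] [MeasurableAdd G]

theorem AddMonoidHomClass.measurableSet_preimage_singleton (φ : F)
    (h0 : MeasurableSet (φ ⁻¹' {0})) (c : R) : MeasurableSet (φ ⁻¹' {c}) := by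
  by_cases hc : c ∈ range φ
  · obtain ⟨e, rfl⟩ := hc
    rw [preimage_singleton_eq_preimage_ker]
    exact h0.preimage (measurable_const_add _)
  · rw [preimage_singleton_eq_empty.2 hc]
    exact .empty

theorem AddMonoidHomClass.measure_preimage_singleton [Fintype R] (φ : F)
    (hφ : Function.Surjective φ) (h0 : MeasurableSet (φ ⁻¹' {0}))
    (μ : Measure G) [μ.IsAddLeftInvariant] [IsProbabilityMeasure μ] (c : R) :
    μ (φ ⁻¹' {c}) = (Fintype.card R : ENNReal)⁻¹ := by
  have hfiber : ∀ c, μ (φ ⁻¹' {c}) = μ (φ ⁻¹' {0}) := fun c => by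
    obtain ⟨e, rfl⟩ := hφ c
    rw [preimage_singleton_eq_preimage_ker, measure_preimage_add]
  have hsum := sum_measure_preimage_singleton (μ := μ) Finset.univ
    (fun c _ => measurableSet_preimage_singleton φ h0 c)
  simp only [hfiber, Finset.sum_const, Finset.card_univ, nsmul_eq_mul, Finset.coe_univ,
    preimage_univ, measure_univ] at hsum
  rw [hfiber]
  exact ENNReal.eq_inv_of_mul_eq_one_left (by rw [mul_comm, hsum])

end FiniteQuotient

theorem MeasureTheory.integral_eq_sum_setIntegral_preimage_singleton {X β E : Type*}
    [MeasurableSpace X] [Fintype β] [NormedAddCommGroup E] [NormedSpace ℝ E] {μ : Measure X}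
    {φ : X → β} (hφ : ∀ b, MeasurableSet (φ ⁻¹' {b})) {f : X → E} (hf : Integrable f μ) :
    ∫ x, f x ∂μ = ∑ b, ∫ x in φ ⁻¹' {b}, f x ∂μ := by
  rw [← integral_iUnion_fintype hφ
    (fun _ _ hab => Disjoint.preimage _ (disjoint_singleton.2 hab)) fun _ => hf.integrableOn,
    ← preimage_iUnion, iUnion_of_singleton, preimage_univ, setIntegral_univ]

namespace PadicInt

variable {p : ℕ} [Fact p.Prime]

theorem toZMod_eq_zero_iff {z : ℤ_[p]} : toZMod z = 0 ↔ ‖z‖ < 1 := by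
  rw [← RingHom.mem_ker, ker_toZMod, IsLocalRing.mem_maximalIdeal, mem_nonunits]

theorem preimage_toZMod_zero_eq_ball : (toZMod ⁻¹' {0} : Set ℤ_[p]) = ball 0 1 := by
  ext z
  exact toZMod_eq_zero_iff.trans mem_ball_zero_iff.symm

theorem norm_eq_one_iff_toZMod_ne_zero {z : ℤ_[p]} : ‖z‖ = 1 ↔ toZMod z ≠ 0 := by
  rw [ne_eq, toZMod_eq_zero_iff, not_lt]
  exact ⟨ge_of_eq, (norm_le_one z).antisymm⟩

theorem norm_eval_eq_one_iff {q : ℤ_[p][X]} {x : ℤ_[p]} :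
    ‖q.eval x‖ = 1 ↔ (q.map toZMod).eval (toZMod x) ≠ 0 := by
  rw [norm_eq_one_iff_toZMod_ne_zero, eval_map, eval₂_at_apply]

theorem norm_eq_inv_pow_valuation {x : ℤ_[p]} (hx : x ≠ 0) :
    ‖x‖ = (p : ℝ)⁻¹ ^ x.valuation := by
  rw [norm_eq_zpow_neg_valuation hx, inv_pow, zpow_neg, zpow_natCast]

theorem closedBall_zero_eq_preimage_toZModPow (k : ℕ) :
    closedBall (0 : ℤ_[p]) ((p : ℝ)⁻¹ ^ k) = toZModPow k ⁻¹' {0} := by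
  ext x
  rw [mem_closedBall_zero_iff, inv_pow, ← zpow_natCast, ← zpow_neg,
    norm_le_pow_iff_mem_span_pow, ← ker_toZModPow, RingHom.mem_ker]
  rfl

theorem sphere_zero_eq_closedBall_diff (k : ℕ) :
    sphere (0 : ℤ_[p]) ((p : ℝ)⁻¹ ^ k) =
      closedBall 0 ((p : ℝ)⁻¹ ^ k) \ closedBall 0 ((p : ℝ)⁻¹ ^ (k + 1)) := by
  have hp₀ : (0 : ℝ) < (p : ℝ)⁻¹ := by simp [(Fact.out : p.Prime).pos]
  have hp₁ : (p : ℝ)⁻¹ < 1 := inv_lt_one_of_one_lt₀ (mod_cast (Fact.out : p.Prime).one_lt)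
  ext x
  simp only [mem_sphere_zero_iff_norm, mem_sdiff, mem_closedBall_zero_iff]
  rcases eq_or_ne x 0 with rfl | hx
  · simp only [norm_zero]
    exact iff_of_false (pow_pos hp₀ k).ne fun h => h.2 (pow_nonneg hp₀.le _)
  · simp only [norm_eq_inv_pow_valuation hx, pow_right_inj₀ hp₀ hp₁.ne,
      pow_le_pow_iff_right_of_lt_one₀ hp₀ hp₁]
    omega

theorem iUnion_sphere_zero : ⋃ k : ℕ, sphere (0 : ℤ_[p]) ((p : ℝ)⁻¹ ^ k) = {0}ᶜ := by
  ext x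
  simp only [mem_iUnion, mem_sphere_zero_iff_norm, mem_compl_singleton_iff]
  refine ⟨fun ⟨k, hk⟩ hx => ?_, fun hx => ⟨x.valuation, norm_eq_inv_pow_valuation hx⟩⟩
  rw [hx, norm_zero] at hk
  exact (pow_pos (inv_pos.2 (Nat.cast_pos.2 (Fact.out : p.Prime).pos)) k).ne hk

theorem exists_isRoot_toZMod_eq {f : ℤ_[p][X]} (hsep : (f.map toZMod).Separable) {a : ZMod p}
    (ha : (f.map toZMod).IsRoot a) :
    ∃ α, f.IsRoot α ∧ toZMod α = a ∧ ‖f.derivative.eval α‖ = 1 := by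
  obtain ⟨a₀, rfl⟩ := ZMod.ringHom_surjective (toZMod : ℤ_[p] →+* ZMod p) a
  have hderiv : ‖f.derivative.eval a₀‖ = 1 := by
    rw [norm_eval_eq_one_iff, ← derivative_map]
    exact hsep.eval₂_derivative_ne_zero (RingHom.id _) ha
  have hroot : ‖f.eval a₀‖ < 1 := by
    rw [← toZMod_eq_zero_iff, ← eval₂_at_apply, ← eval_map]
    exact ha
  obtain ⟨α, hα, hclose, hderiv', -⟩ := hensels_lemma (F := f) (a := a₀)
    (by simpa only [coe_aeval_eq_eval, hderiv, one_pow] using hroot)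
  simp only [coe_aeval_eq_eval, hderiv] at hα hclose hderiv'
  refine ⟨α, hα, ?_, hderiv'⟩
  rw [← sub_eq_zero, ← map_sub, toZMod_eq_zero_iff]
  exact hclose

theorem norm_eval_eq_norm_sub_of_isRoot {f : ℤ_[p][X]} {α x : ℤ_[p]} (hα : f.IsRoot α)
    (hderiv : ‖f.derivative.eval α‖ = 1) (hx : toZMod x = toZMod α) :
    ‖f.eval x‖ = ‖x - α‖ := by
  set g := f /ₘ (X - C α)
  have hfg : (X - C α) * g = f := mul_divByMonic_eq_iff_isRoot.2 hα
  have hgα : ‖g.eval α‖ = 1 := by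
    rw [← hderiv, ← hfg]
    simp [derivative_mul]
  have hgx : ‖g.eval x‖ = 1 := by
    rw [norm_eval_eq_one_iff, hx, ← norm_eval_eq_one_iff]
    exact hgα
  rw [← hfg, eval_mul, norm_mul, hgx, mul_one, eval_sub, eval_X, eval_C]

section Haar

variable [MeasurableSpace ℤ_[p]] [BorelSpace ℤ_[p]]

theorem measurableSet_preimage_toZMod (a : ZMod p) :
    MeasurableSet (toZMod ⁻¹' {a} : Set ℤ_[p]) :=
  AddMonoidHomClass.measurableSet_preimage_singleton toZMod
    (preimage_toZMod_zero_eq_ball (p := p) ▸ measurableSet_ball) a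

variable (μ : Measure ℤ_[p]) [μ.IsAddHaarMeasure] [IsProbabilityMeasure μ]

theorem measureReal_preimage_toZMod (a : ZMod p) :
    μ.real (toZMod ⁻¹' {a}) = (p : ℝ)⁻¹ := by
  rw [measureReal_def, AddMonoidHomClass.measure_preimage_singleton toZMod
    (ZMod.ringHom_surjective _) (measurableSet_preimage_toZMod 0) μ a]
  simp

theorem measureReal_closedBall_zero (k : ℕ) :
    μ.real (closedBall 0 ((p : ℝ)⁻¹ ^ k)) = (p : ℝ)⁻¹ ^ k := by
  have : NeZero (p ^ k) := ⟨pow_ne_zero k (Fact.out : p.Prime).ne_zero⟩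
  have h0 : MeasurableSet (toZModPow k ⁻¹' {0} : Set ℤ_[p]) :=
    closedBall_zero_eq_preimage_toZModPow (p := p) k ▸ measurableSet_closedBall
  rw [closedBall_zero_eq_preimage_toZModPow, measureReal_def,
    AddMonoidHomClass.measure_preimage_singleton _ (ZMod.ringHom_surjective _) h0 μ 0]
  simp

theorem measureReal_sphere_zero (k : ℕ) :
    μ.real (sphere 0 ((p : ℝ)⁻¹ ^ k)) = (1 - (p : ℝ)⁻¹) * (p : ℝ)⁻¹ ^ k := by
  rw [sphere_zero_eq_closedBall_diff, measureReal_sdiff (closedBall_subset_closedBall ?_)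
    measurableSet_closedBall, measureReal_closedBall_zero, measureReal_closedBall_zero]
  · ring
  · exact pow_le_pow_of_le_one (by positivity)
      (inv_le_one_of_one_le₀ (mod_cast (Fact.out : p.Prime).one_le)) k.le_succ

theorem integral_norm : ∫ x, ‖x‖ ∂μ = p / (p + 1) := by
  set r : ℝ := (p : ℝ)⁻¹ with hr
  have hp : (1 : ℝ) < p := mod_cast (Fact.out : p.Prime).one_lt
  have hr₀ : 0 < r := by positivity
  have hr₁ : r < 1 := inv_lt_one_of_one_lt₀ hp
  have hdisj : Pairwise (Function.onFun Disjoint fun k : ℕ => sphere (0 : ℤ_[p]) (r ^ k)) :=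
    fun k l hkl => disjoint_left.2 fun x hk hl => hkl <| pow_right_injective₀ hr₀ hr₁.ne <|
      (mem_sphere_zero_iff_norm.1 hk).symm.trans (mem_sphere_zero_iff_norm.1 hl)
  have hsphere (k : ℕ) : ∫ x in sphere 0 (r ^ k), ‖x‖ ∂μ = (1 - r) * (r ^ 2) ^ k := by
    rw [setIntegral_congr_fun isClosed_sphere.measurableSet
      fun x hx => mem_sphere_zero_iff_norm.1 hx, setIntegral_const, measureReal_sphere_zero,
      smul_eq_mul]
    ring
  have hint : Integrable (fun x : ℤ_[p] => ‖x‖) μ :=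
    continuous_norm.integrable_of_hasCompactSupport (.of_compactSpace _)
  rw [← setIntegral_eq_integral_of_forall_compl_eq_zero (s := ⋃ k : ℕ, sphere 0 (r ^ k)),
    integral_iUnion (fun _ => isClosed_sphere.measurableSet) hdisj hint.integrableOn]
  · simp only [hsphere]
    rw [tsum_mul_left, tsum_geometric_of_lt_one (by positivity) (by nlinarith),
      show 1 - r ^ 2 = (1 - r) * (1 + r) by ring, ← div_eq_mul_inv,
      div_mul_cancel_left₀ (sub_ne_zero.2 hr₁.ne'), hr]
    field_simp
  · intro x hx
    rw [iUnion_sphere_zero, notMem_compl_iff, mem_singleton_iff] at hx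
    rw [hx, norm_zero]

theorem setIntegral_preimage_toZMod_of_norm_eq_one {g : ℤ_[p] → ℤ_[p]} {a : ZMod p}
    (hg : ∀ x, toZMod x = a → ‖g x‖ = 1) :
    ∫ x in toZMod ⁻¹' {a}, ‖g x‖ ∂μ = (p : ℝ)⁻¹ := by
  rw [setIntegral_congr_fun (measurableSet_preimage_toZMod a) hg, setIntegral_const,
    measureReal_preimage_toZMod, smul_eq_mul, mul_one]

theorem setIntegral_norm_preimage_toZMod_zero :
    ∫ x in toZMod ⁻¹' {0}, ‖x‖ ∂μ = ((p : ℝ) * (p + 1))⁻¹ := by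
  have hint : Integrable (fun x : ℤ_[p] => ‖x‖) μ :=
    continuous_norm.integrable_of_hasCompactSupport (.of_compactSpace _)
  have hsplit := integral_eq_sum_setIntegral_preimage_singleton measurableSet_preimage_toZMod hint
  rw [integral_norm, Fintype.sum_eq_add_sum_compl 0,
    Finset.sum_congr rfl fun a ha => setIntegral_preimage_toZMod_of_norm_eq_one μ
      fun x hx => norm_eq_one_iff_toZMod_ne_zero.2 (by simpa [hx] using ha),
    Finset.sum_const, Finset.card_compl, Finset.card_singleton, ZMod.card, nsmul_eq_mul] at hsplit
  have hp : (1 : ℝ) < p := mod_cast (Fact.out : p.Prime).one_lt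
  rw [Nat.cast_sub (Fact.out : p.Prime).one_le, Nat.cast_one] at hsplit
  field_simp at hsplit ⊢
  linarith

theorem setIntegral_norm_eval_preimage_toZMod_of_isRoot {f : ℤ_[p][X]}
    (hsep : (f.map toZMod).Separable) {a : ZMod p} (ha : (f.map toZMod).IsRoot a) :
    ∫ x in toZMod ⁻¹' {a}, ‖f.eval x‖ ∂μ = ((p : ℝ) * (p + 1))⁻¹ := by
  obtain ⟨α, hα, rfl, hderiv⟩ := exists_isRoot_toZMod_eq hsep ha
  have hfiber : toZMod ⁻¹' {toZMod α} = (· - α) ⁻¹' (toZMod ⁻¹' {0}) := by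
    ext x
    simp [sub_eq_zero]
  rw [setIntegral_congr_fun (measurableSet_preimage_toZMod _)
      fun x hx => norm_eval_eq_norm_sub_of_isRoot hα hderiv hx, hfiber,
    (measurePreserving_sub_right μ α).setIntegral_preimage_emb (measurableEmbedding_subRight α)
      (‖·‖), setIntegral_norm_preimage_toZMod_zero]

end Haar

end PadicInt

theorem stmt12_general (p : ℕ) [Fact p.Prime] [MeasurableSpace ℤ_[p]] [BorelSpace ℤ_[p]]
    (μ : Measure ℤ_[p]) [μ.IsAddHaarMeasure] [IsProbabilityMeasure μ]
    (f : Polynomial ℤ_[p])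
    (hsep : (f.map (PadicInt.toZMod (p := p))).Separable) :
    ∫ x, ‖f.eval x‖ ∂μ =
      1 - ((Finset.univ.filter
        fun a : ZMod p => (f.map (PadicInt.toZMod (p := p))).eval a = 0).card : ℝ)
          / (p + 1) := by
  set fbar := f.map (toZMod (p := p))
  have hint : Integrable (fun x => ‖f.eval x‖) μ :=
    f.continuous.norm.integrable_of_hasCompactSupport (.of_compactSpace _)
  have hroots : ∀ a ∈ Finset.univ.filter fun a => fbar.eval a = 0,
      ∫ x in toZMod ⁻¹' {a}, ‖f.eval x‖ ∂μ = ((p : ℝ) * (p + 1))⁻¹ := fun a ha =>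
    setIntegral_norm_eval_preimage_toZMod_of_isRoot μ hsep (Finset.mem_filter.1 ha).2
  have hnonroots : ∀ a ∈ Finset.univ.filter fun a => ¬fbar.eval a = 0,
      ∫ x in toZMod ⁻¹' {a}, ‖f.eval x‖ ∂μ = (p : ℝ)⁻¹ := fun a ha =>
    setIntegral_preimage_toZMod_of_norm_eq_one μ
      fun x hx => norm_eval_eq_one_iff.2 (hx ▸ (Finset.mem_filter.1 ha).2)
  have hcard : ((Finset.univ.filter fun a => fbar.eval a = 0).card : ℝ) +
      (Finset.univ.filter fun a => ¬fbar.eval a = 0).card = p := by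
    rw [← Nat.cast_add, Finset.card_filter_add_card_filter_not, Finset.card_univ, ZMod.card]
  rw [integral_eq_sum_setIntegral_preimage_singleton measurableSet_preimage_toZMod hint,
    ← Finset.sum_filter_add_sum_filter_not _ fun a => fbar.eval a = 0,
    Finset.sum_congr rfl hroots, Finset.sum_congr rfl hnonroots, Finset.sum_const,
    Finset.sum_const, nsmul_eq_mul, nsmul_eq_mul]
  have hp : (0 : ℝ) < p := mod_cast (Fact.out : p.Prime).pos
  field_simp
  linear_combination ((p : ℝ) + 1) * hcard

/-- Let `f ∈ ℤ_p[X]` be a polynomial whose reduction `f̄ ∈ 𝔽_p[X]` is separable and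
non-constant.  Then `∫_{ℤ_p} |f(x)|_p dx = 1 − m/(p+1)`, where `m` is the number of
roots of `f̄` in `𝔽_p` and the integral is against the Haar probability measure. -/
theorem stmt12 (p : ℕ) [Fact p.Prime] [MeasurableSpace ℤ_[p]] [BorelSpace ℤ_[p]]
    (μ : Measure ℤ_[p]) [μ.IsAddHaarMeasure] [IsProbabilityMeasure μ]
    (f : Polynomial ℤ_[p])
    (hsep : (f.map (PadicInt.toZMod (p := p))).Separable)
    (hdeg : 0 < (f.map (PadicInt.toZMod (p := p))).natDegree) :
    ∫ x, ‖f.eval x‖ ∂μ =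
      1 - ((Finset.univ.filter
        fun a : ZMod p => (f.map (PadicInt.toZMod (p := p))).eval a = 0).card : ℝ)
          / (p + 1) :=
  stmt12_general p μ f hsep
end
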